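/- arXiv:1111.3485 — 3 statements merged into one kernel-verified Lean document; each statement's English description precedes it below -/
import Mathlib

section
/- Let ξ be a primitive l-th root of unity, ζ_n a primitive n-th root of unity, and k a positive integer with gcd(k, nl) = 1. Then ∏_{i=0}^{n-1} η_k(ξ ζ_n^i) = η_k(ξ^n), where η_k(ζ) = 1 + ζ + ... + ζ^{k-1} for ζ ≠ 1 and η_k(1) = 1. -/
/-!
For `ξ ^ n ≠ 1` no `ξ ζ^i` equals `1`, and `∏ᵢ (1 - x ζ^i) = 1 - x^n`, applied to `ζ` with `x = ξ`
and to the primitive root `ζ^k` with `x = ξ^k`, turns the product into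
`(1 - ξ^{nk}) / (1 - ξ^n) = η_k(ξ^n)`. For `ξ ^ n = 1` the points `ξ ζ^i` run over all `n`-th
roots of unity, so the product is `∏_{0<i<n} (1 - (ζ^k)^i) / (1 - ζ^i) = n / n = 1`, because
`∏_{0<i<n} (1 - ω^i) = n` for every primitive `n`-th root `ω`, in particular for `ζ` and `ζ^k`.
-/

/-- The cyclotomic unit `η_k(z) = (1 - z^k)/(1 - z)` for `z ≠ 1`, and `η_k(1) = 1`. -/
noncomputable def eta (k : ℕ) (z : ℂ) : ℂ := if z = 1 then 1 else (1 - z ^ k) / (1 - z)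

open Finset Polynomial

namespace IsPrimitiveRoot

variable {R : Type*} [CommRing R] [IsDomain R] {n : ℕ} {ζ : R}

theorem prod_one_sub_mul_pow (hζ : IsPrimitiveRoot ζ n) (hn : 0 < n) (x : R) :
    ∏ i ∈ range n, (1 - x * ζ ^ i) = 1 - x ^ n := by
  have h := congrArg (eval 1) (X_pow_sub_C_eq_prod hζ hn (rfl : x ^ n = x ^ n))
  simp only [eval_sub, eval_pow, eval_X, eval_C, one_pow, eval_prod] at h
  simp only [h, mul_comm x]

theorem prod_range_mul_pow_eq_prod_range_pow {M : Type*} [CommMonoid M]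
    (hζ : IsPrimitiveRoot ζ n) {ξ : R} (hξ : ξ ^ n = 1) (f : R → M) :
    ∏ i ∈ range n, f (ξ * ζ ^ i) = ∏ i ∈ range n, f (ζ ^ i) := by
  have hroots := (hζ.nthRoots_eq hξ).symm.trans (hζ.nthRoots_eq (one_pow n))
  simpa [prod_eq_multiset_prod, Multiset.map_map, mul_comm ξ] using
    congrArg (fun s => (s.map f).prod) hroots

end IsPrimitiveRoot

theorem eta_one (k : ℕ) : eta k 1 = 1 := if_pos rfl

theorem eta_of_ne_one (k : ℕ) {z : ℂ} (hz : z ≠ 1) : eta k z = (1 - z ^ k) / (1 - z) :=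
  if_neg hz

theorem prod_range_eta_pow_eq_one {n k : ℕ} {ζ : ℂ} (hζ : IsPrimitiveRoot ζ n)
    (hk : k.Coprime n) : ∏ i ∈ range n, eta k (ζ ^ i) = 1 := by
  obtain _ | m := n
  · rfl
  have hne (i : ℕ) (hi : i ∈ range m) : ζ ^ (i + 1) ≠ 1 :=
    hζ.pow_ne_one_of_pos_of_lt i.succ_ne_zero (by simpa using hi)
  have hnum := (hζ.pow_of_coprime k hk).prod_one_sub_pow_eq_order
  have hden := hζ.prod_one_sub_pow_eq_order
  have hden0 : ((m : ℂ) + 1) ≠ 0 := by exact_mod_cast m.succ_ne_zero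
  rw [prod_range_succ', pow_zero, eta_one, mul_one,
    prod_congr rfl fun i hi => eta_of_ne_one k (hne i hi), prod_div_distrib]
  simp only [← pow_mul, mul_comm k] at hnum ⊢
  rw [hnum, hden, div_self hden0]

theorem prod_eta_eq_eta_pow_general {l n : ℕ} (ξ ζ : ℂ)
    (hζ : IsPrimitiveRoot ζ n)
    (k : ℕ) (hco : k.Coprime (n * l)) :
    ∏ i ∈ Finset.range n, eta k (ξ * ζ ^ i) = eta k (ξ ^ n) := by
  have hkn : k.Coprime n := hco.coprime_dvd_right (dvd_mul_right n l)
  by_cases hξn : ξ ^ n = 1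
  · rw [hξn, eta_one, hζ.prod_range_mul_pow_eq_prod_range_pow hξn,
      prod_range_eta_pow_eq_one hζ hkn]
  have hn : 0 < n := Nat.pos_of_ne_zero fun h => hξn (h ▸ pow_zero ξ)
  have hne (i : ℕ) : ξ * ζ ^ i ≠ 1 := fun h => hξn <| by
    simpa [mul_pow, ← pow_mul, pow_mul', hζ.pow_eq_one] using congrArg (· ^ n) h
  calc ∏ i ∈ range n, eta k (ξ * ζ ^ i)
      = (∏ i ∈ range n, (1 - ξ ^ k * (ζ ^ k) ^ i)) / ∏ i ∈ range n, (1 - ξ * ζ ^ i) := by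
        rw [← prod_div_distrib]
        refine prod_congr rfl fun i _ => ?_
        rw [eta_of_ne_one k (hne i), mul_pow, ← pow_mul, ← pow_mul, mul_comm i k]
    _ = (1 - (ξ ^ k) ^ n) / (1 - ξ ^ n) := by
        rw [(hζ.pow_of_coprime k hkn).prod_one_sub_mul_pow hn, hζ.prod_one_sub_mul_pow hn]
    _ = eta k (ξ ^ n) := by
        rw [eta_of_ne_one k hξn, ← pow_mul, ← pow_mul, mul_comm]

theorem prod_eta_eq_eta_pow {l n : ℕ} (hl : 0 < l) (hn : 0 < n) (ξ ζ : ℂ)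
    (hξ : IsPrimitiveRoot ξ l) (hζ : IsPrimitiveRoot ζ n)
    (k : ℕ) (hk : 0 < k) (hco : k.Coprime (n * l)) :
    ∏ i ∈ Finset.range n, eta k (ξ * ζ ^ i) = eta k (ξ ^ n) :=
  prod_eta_eq_eta_pow_general ξ ζ hζ k hco
end

section
/- Let G be a finite abelian group, g ∈ G, H a subgroup of G with G/H cyclic, ρ_H a linear character of G with kernel H, and K an arbitrary subgroup of G. Set h = |H ∩ K| and t = [K : H ∩ K]. Let k and m be positive integers such that gcd(k, t) = 1 and k^m ≡ 1 (mod |gu|) for every u ∈ K. Then ∏_{u ∈ K} ρ_H(u_{k,m}(gu)) = η_k(ρ_H(g)^t)^{m h}. -/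
/-- The Bass unit element `u_{k,m}(g)` in the integral group ring `ℤG`. -/
noncomputable def bassElem {G : Type*} [Group G] (g : G) (k m : ℕ) : MonoidAlgebra ℤ G :=
  (∑ i ∈ Finset.range k, MonoidAlgebra.of ℤ G (g ^ i)) ^ m
    + ((1 - (k : ℤ) ^ m) / (orderOf g : ℤ)) •
        ∑ i ∈ Finset.range (orderOf g), MonoidAlgebra.of ℤ G (g ^ i)

/-!
Under `ρ` the Bass unit `u_{k,m}(x)` becomes `η_k(ρ x)^m`: the sum `1 + x + ⋯ + x^{|x|-1}` is
sent to `0` unless `ρ x = 1`, and in that case its coefficient is chosen to make the total `1`.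
Restricted to `K`, `ρ` maps onto the `t`-th roots of unity with kernel `H ∩ K`, so the product
is `(∏_{ζ^t = 1} η_k(ρ(g) ζ))^{m h}`. Finally `∏_{ζ^t = 1} η_k(z ζ) = η_k(z^t)` when `k` is prime
to `t`, because `ζ ↦ ζ^k` permutes the `t`-th roots of unity: if `z^t ≠ 1`, multiply by
`∏ (1 - z ζ) = 1 - z^t`; if `z^t = 1`, translate by `z` and compare `∏ (1 - ζ^k)` with
`∏ (1 - ζ)` over `ζ ≠ 1`.
-/

open Finset
open Polynomial (nthRootsFinset mem_nthRootsFinset)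

lemma eta_mul_one_sub (k : ℕ) (z : ℂ) : eta k z * (1 - z) = 1 - z ^ k := by
  unfold eta
  split_ifs with h
  · simp [h]
  · exact div_mul_cancel₀ _ (sub_ne_zero.mpr (Ne.symm h))

lemma eta_eq_geom_sum {z : ℂ} (h : z ≠ 1) (k : ℕ) : eta k z = ∑ i ∈ range k, z ^ i :=
  mul_right_cancel₀ (sub_ne_zero.mpr (Ne.symm h))
    ((eta_mul_one_sub k z).trans (geom_sum_mul_neg z k).symm)

lemma prod_nthRootsFinset_one_sub_mul {t : ℕ} (ht : 0 < t) (w : ℂ) :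
    ∏ ζ ∈ nthRootsFinset t (1 : ℂ), (1 - w * ζ) = 1 - w ^ t := by
  have hroots := Polynomial.X_pow_sub_one_eq_prod ht (Complex.isPrimitiveRoot_exp t ht.ne')
  rcases eq_or_ne w 0 with rfl | hw
  · simp [ht.ne']
  calc ∏ ζ ∈ nthRootsFinset t (1 : ℂ), (1 - w * ζ)
      = ∏ ζ ∈ nthRootsFinset t (1 : ℂ), w * (w⁻¹ - ζ) := by
        refine prod_congr rfl fun ζ _ => ?_
        rw [mul_sub, mul_inv_cancel₀ hw]
    _ = w ^ t * (w⁻¹ ^ t - 1) := by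
        rw [prod_mul_distrib, prod_const,
          (Complex.isPrimitiveRoot_exp t ht.ne').card_nthRootsFinset]
        congr 1
        simpa [Polynomial.eval_prod] using congrArg (Polynomial.eval w⁻¹) hroots.symm
    _ = 1 - w ^ t := by rw [mul_sub, mul_one, ← mul_pow, mul_inv_cancel₀ hw, one_pow]

namespace rootsOfUnity

variable {t : ℕ} [NeZero t]

noncomputable instance : Fintype (rootsOfUnity t ℂ) := Fintype.ofFinite _

lemma prod_coe_eq_prod_nthRootsFinset {M : Type*} [CommMonoid M] (f : ℂ → M) :
    ∏ ζ : rootsOfUnity t ℂ, f ((ζ : ℂˣ) : ℂ) = ∏ x ∈ nthRootsFinset t (1 : ℂ), f x := by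
  refine prod_nbij (fun ζ => ((ζ : ℂˣ) : ℂ)) (fun ζ _ => ?_) (fun a _ b _ h => ?_) (fun x hx => ?_)
    (fun _ _ => rfl)
  · exact (mem_nthRootsFinset (NeZero.pos t) 1).mpr ((mem_rootsOfUnity' t _).mp ζ.2)
  · exact Subtype.ext (Units.ext h)
  · exact ⟨mkOfPowEq x ((mem_nthRootsFinset (NeZero.pos t) 1).mp hx),
      mem_coe.mpr (mem_univ _), coe_mkOfPowEq _⟩

lemma prod_one_sub_mul (w : ℂ) : ∏ ζ : rootsOfUnity t ℂ, (1 - w * (ζ : ℂˣ)) = 1 - w ^ t := by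
  rw [prod_coe_eq_prod_nthRootsFinset (fun z => 1 - w * z),
    prod_nthRootsFinset_one_sub_mul (NeZero.pos t)]

lemma prod_comp_pow {M : Type*} [CommMonoid M] {k : ℕ} (hk : k.Coprime t)
    (f : rootsOfUnity t ℂ → M) : ∏ ζ, f (ζ ^ k) = ∏ ζ, f ζ :=
  (powCoprime (G := rootsOfUnity t ℂ) (by rw [Complex.card_rootsOfUnity]; exact hk.symm)).prod_comp
    f

lemma prod_eta_coe {k : ℕ} (hk : k.Coprime t) :
    ∏ ζ : rootsOfUnity t ℂ, eta k (ζ : ℂˣ) = 1 := by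
  classical
  -- `1 - ζ`, patched at `ζ = 1` so that `∏ g` is nonzero and can be cancelled
  set g : rootsOfUnity t ℂ → ℂ := fun ζ => if ζ = 1 then 1 else 1 - (ζ : ℂˣ)
  have hg : ∀ ζ : rootsOfUnity t ℂ, eta k (ζ : ℂˣ) * g ζ = g (ζ ^ k) := by
    intro ζ
    by_cases hζ : ζ = 1
    · simp [g, hζ, eta]
    have hζt : ζ ^ t = 1 := Subtype.ext ((mem_rootsOfUnity t _).mp ζ.2)
    have hζk : ζ ^ k ≠ 1 := fun h => hζ ((pow_eq_one_iff_of_coprime hk).mp ⟨h, hζt⟩)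
    simp only [g, if_neg hζ, if_neg hζk, eta_mul_one_sub]
    push_cast
    rfl
  have hg0 : ∏ ζ, g ζ ≠ 0 := by
    refine prod_ne_zero_iff.mpr fun ζ _ => ?_
    by_cases hζ : ζ = 1
    · simp [g, hζ]
    · simp only [g, if_neg hζ, sub_ne_zero]
      exact fun h => hζ (Subtype.ext (Units.ext h.symm))
  have hperm := prod_comp_pow hk g
  rw [← prod_congr rfl fun ζ _ => hg ζ, prod_mul_distrib] at hperm
  exact (mul_eq_right₀ hg0).mp hperm

lemma prod_eta_mul {k : ℕ} (hk : k.Coprime t) (z : ℂ) :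
    ∏ ζ : rootsOfUnity t ℂ, eta k (z * (ζ : ℂˣ)) = eta k (z ^ t) := by
  by_cases hz : z ^ t = 1
  · set z' := mkOfPowEq z hz
    have hz' : z = ((z' : ℂˣ) : ℂ) := (coe_mkOfPowEq hz).symm
    calc ∏ ζ : rootsOfUnity t ℂ, eta k (z * (ζ : ℂˣ))
        = ∏ ζ : rootsOfUnity t ℂ, eta k ((z' * ζ : rootsOfUnity t ℂ) : ℂˣ) := by
          simp [hz']
      _ = ∏ ζ : rootsOfUnity t ℂ, eta k (ζ : ℂˣ) :=
          Equiv.prod_comp (Equiv.mulLeft z') fun ζ : rootsOfUnity t ℂ => eta k (ζ : ℂˣ)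
      _ = eta k (z ^ t) := by rw [prod_eta_coe hk, hz, eta, if_pos rfl]
  have hprod : ∏ ζ : rootsOfUnity t ℂ, (1 - z * (ζ : ℂˣ)) ≠ 0 := by
    rwa [prod_one_sub_mul, sub_ne_zero, ne_comm]
  refine mul_right_cancel₀ hprod ?_
  rw [← prod_mul_distrib, prod_congr rfl fun ζ _ => eta_mul_one_sub k _, prod_one_sub_mul,
    eta_mul_one_sub]
  calc ∏ ζ : rootsOfUnity t ℂ, (1 - (z * (ζ : ℂˣ)) ^ k)
      = ∏ ζ : rootsOfUnity t ℂ, (1 - z ^ k * ((ζ ^ k : rootsOfUnity t ℂ) : ℂˣ)) := by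
        simp [mul_pow]
    _ = 1 - (z ^ t) ^ k := by
        rw [prod_comp_pow hk (fun ζ => 1 - z ^ k * (ζ : ℂˣ)), prod_one_sub_mul, ← pow_mul,
          ← pow_mul, mul_comm]

end rootsOfUnity

lemma lift_bassElem {G : Type*} [Group G] (ρ : G →* ℂ) {x : G} {k m : ℕ}
    (hdvd : (orderOf x : ℤ) ∣ 1 - (k : ℤ) ^ m) :
    MonoidAlgebra.lift ℤ ℂ G ρ (bassElem x k m) = eta k (ρ x) ^ m := by
  simp only [bassElem, map_add, map_pow, map_sum, map_zsmul, MonoidAlgebra.lift_of]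
  by_cases h : ρ x = 1
  · have hc : (((1 - (k : ℤ) ^ m) / orderOf x * orderOf x : ℤ) : ℂ) = 1 - (k : ℂ) ^ m := by
      rw [Int.ediv_mul_cancel hdvd]; push_cast; ring
    simp only [h, one_pow, sum_const, card_range, nsmul_eq_mul, mul_one, zsmul_eq_mul,
      eta, if_pos]
    push_cast at hc ⊢
    linear_combination hc
  · have hsum : ∑ i ∈ range (orderOf x), ρ x ^ i = 0 := by
      refine (mul_eq_zero.mp ?_).resolve_right (sub_ne_zero.mpr (Ne.symm h))
      rw [geom_sum_mul_neg, ← map_pow, pow_orderOf_eq_one, map_one, sub_self]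
    rw [hsum, smul_zero, add_zero, eta_eq_geom_sum h]

lemma MonoidHom.prod_comp_eq_prod_pow_card_ker {K M β : Type*} [Group K] [Fintype K] [Group M]
    [Fintype M] [CommMonoid β] (ψ : K →* M) (hψ : Function.Surjective ψ) (F : M → β) :
    ∏ u, F (ψ u) = ∏ y, F y ^ Nat.card ψ.ker := by
  classical
  rw [Finset.prod_comp, image_univ_of_surjective hψ]
  refine prod_congr rfl fun y _ => congrArg _ ?_
  rw [card_fiber_eq_of_mem_range ψ (hψ y) ⟨1, map_one ψ⟩, Nat.card_eq_fintype_card,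
    Fintype.card_subtype]
  simp only [MonoidHom.mem_ker]

lemma Subgroup.card_subgroupOf {G : Type*} [Group G] (H K : Subgroup G) :
    Nat.card (H.subgroupOf K) = Nat.card (H ⊓ K : Subgroup G) := by
  rw [← inf_subgroupOf_right]
  exact Nat.card_congr (subgroupOfEquivOfLe inf_le_right).toEquiv

namespace MonoidHom

variable {G : Type*} [CommGroup G] {ρ : G →* ℂ} {H : Subgroup G} (K : Subgroup G)

lemma pow_relIndex_eq_one (hH : ∀ x ∈ H, ρ x = 1) (u : K) : ρ u ^ H.relIndex K = 1 := by
  rw [← map_pow]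
  exact hH _ (Subgroup.mem_subgroupOf.mp ((H.subgroupOf K).pow_index_mem u))

noncomputable def restrictRootsOfUnity (ρ : G →* ℂ) (H K : Subgroup G) [NeZero (H.relIndex K)]
    (hH : ∀ x ∈ H, ρ x = 1) : K →* rootsOfUnity (H.relIndex K) ℂ :=
  (ρ.comp K.subtype).toHomUnits.codRestrict _ fun u =>
    (mem_rootsOfUnity' _ _).mpr (pow_relIndex_eq_one K hH u)

variable [NeZero (H.relIndex K)]

lemma coe_restrictRootsOfUnity (hH : ∀ x ∈ H, ρ x = 1) (u : K) :
    ((ρ.restrictRootsOfUnity H K hH u : ℂˣ) : ℂ) = ρ u := rfl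

lemma ker_restrictRootsOfUnity (hker : ∀ x, ρ x = 1 ↔ x ∈ H) :
    (ρ.restrictRootsOfUnity H K fun x => (hker x).mpr).ker = H.subgroupOf K := by
  ext u
  rw [mem_ker, Subgroup.mem_subgroupOf, ← hker,
    ← coe_restrictRootsOfUnity K fun x => (hker x).mpr]
  exact ⟨fun h => by rw [h]; rfl, fun h => Subtype.ext (Units.ext h)⟩

lemma restrictRootsOfUnity_surjective [Finite K] (hker : ∀ x, ρ x = 1 ↔ x ∈ H) :
    Function.Surjective (ρ.restrictRootsOfUnity H K fun x => (hker x).mpr) := by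
  refine surjective_of_card_ker_le_div _ (le_of_eq ?_)
  rw [ker_restrictRootsOfUnity K hker, Complex.card_rootsOfUnity,
    ← (H.subgroupOf K).card_mul_index]
  exact (Nat.mul_div_cancel _ (NeZero.pos (H.relIndex K))).symm

end MonoidHom

theorem prod_character_bassElem_general {G : Type*} [CommGroup G] [Fintype G] (H K : Subgroup G)
    (ρ : G →* ℂ) (hker : ∀ x, ρ x = 1 ↔ x ∈ H)
    (g : G) (k m : ℕ)
    (hco : k.Coprime (Subgroup.relIndex H K))
    (hmod : ∀ u ∈ K, k ^ m ≡ 1 [MOD orderOf (g * u)]) :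
    ∏ᶠ u : K, MonoidAlgebra.lift ℤ ℂ G ρ (bassElem (g * u) k m)
      = eta k (ρ g ^ Subgroup.relIndex H K) ^ (m * Nat.card (H ⊓ K : Subgroup G)) := by
  classical
  have : NeZero (H.relIndex K) := ⟨Subgroup.index_ne_zero_of_finite⟩
  set ψ := ρ.restrictRootsOfUnity H K fun x => (hker x).mpr
  have hψ : Function.Surjective ψ := MonoidHom.restrictRootsOfUnity_surjective K hker
  calc ∏ᶠ u : K, MonoidAlgebra.lift ℤ ℂ G ρ (bassElem (g * u) k m)
      = ∏ u : K, eta k (ρ g * (ψ u : ℂˣ)) ^ m := by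
        rw [finprod_eq_prod_of_fintype]
        refine prod_congr rfl fun u _ => ?_
        rw [lift_bassElem ρ (by exact_mod_cast (hmod u u.2).dvd), map_mul]
        rfl
    _ = (∏ ζ : rootsOfUnity (H.relIndex K) ℂ, eta k (ρ g * (ζ : ℂˣ))) ^ (m * Nat.card ψ.ker) := by
        rw [prod_pow, ψ.prod_comp_eq_prod_pow_card_ker hψ fun ζ => eta k (ρ g * (ζ : ℂˣ)),
          prod_pow, ← pow_mul, mul_comm]
    _ = _ := by
        rw [rootsOfUnity.prod_eta_mul hco, MonoidHom.ker_restrictRootsOfUnity K hker,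
          Subgroup.card_subgroupOf]

theorem prod_character_bassElem {G : Type*} [CommGroup G] [Fintype G] (H K : Subgroup G)
    (hH : IsCyclic (G ⧸ H)) (ρ : G →* ℂ) (hker : ∀ x, ρ x = 1 ↔ x ∈ H)
    (g : G) (k m : ℕ) (hk : 0 < k) (hm : 0 < m)
    (hco : k.Coprime (Subgroup.relIndex H K))
    (hmod : ∀ u ∈ K, k ^ m ≡ 1 [MOD orderOf (g * u)]) :
    ∏ᶠ u : K, MonoidAlgebra.lift ℤ ℂ G ρ (bassElem (g * u) k m)
      = eta k (ρ g ^ Subgroup.relIndex H K) ^ (m * Nat.card (H ⊓ K : Subgroup G)) :=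
  prod_character_bassElem_general H K ρ hker g k m hco hmod
end

section
/- Let g be an element of order n in a group G and let k, k₁, m be positive integers with k^m ≡ 1 (mod n) and k₁^m ≡ 1 (mod n). Then u_{k,m}(g) · u_{k₁,m}(g^k) = u_{k k₁, m}(g). -/
open Finset

theorem Nat.coprime_of_pow_modEq_one {n k m : ℕ} (hm : 0 < m) (h : k ^ m ≡ 1 [MOD n]) :
    k.Coprime n :=
  (Nat.coprime_pow_left_iff hm k n).mp (Nat.coprime_of_mul_modEq_one 1 (by rwa [mul_one]))

theorem Int.one_sub_mul_ediv {n a b : ℤ} (hn : n ≠ 0) (ha : n ∣ 1 - a) (hb : n ∣ 1 - b) :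
    (1 - a * b) / n = (1 - b) / n * a + (1 - a) / n * b + (1 - a) / n * ((1 - b) / n) * n := by
  obtain ⟨α, hα⟩ := ha
  obtain ⟨β, hβ⟩ := hb
  obtain rfl : a = 1 - n * α := by linarith
  obtain rfl : b = 1 - n * β := by linarith
  have hab : 1 - (1 - n * α) * (1 - n * β) = n * (α + β - n * α * β) := by ring
  simp only [sub_sub_cancel, hab, Int.mul_ediv_cancel_left _ hn]
  ring

theorem Finset.sum_range_mul_of_coprime {M : Type*} [AddCommMonoid M] {f : ℕ → M} {n k : ℕ}
    (hf : ∀ i, f (i % n) = f i) (hk : k.Coprime n) :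
    ∑ i ∈ range n, f (k * i) = ∑ i ∈ range n, f i := by
  have hmaps : Set.MapsTo (fun i ↦ k * i % n) (range n) (range n) := fun i hi ↦
    mem_range.2 (Nat.mod_lt _ (Nat.zero_lt_of_lt (mem_range.1 hi)))
  have hinj : Set.InjOn (fun i ↦ k * i % n) (range n) := fun i hi j hj hij ↦ by
    have := Nat.ModEq.cancel_left_of_coprime (Nat.coprime_comm.1 hk) hij
    rwa [Nat.ModEq, Nat.mod_eq_of_lt (mem_range.1 hi), Nat.mod_eq_of_lt (mem_range.1 hj)] at this
  exact sum_nbij _ hmaps hinj (surjOn_of_injOn_of_card_le _ hmaps hinj le_rfl)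
    fun i _ ↦ (hf _).symm

section Ring

variable {R : Type*} [Ring R]

theorem pow_mul_eq_zsmul_of_mul_eq_zsmul {a s : R} {c : ℤ} (h : a * s = c • s) (m : ℕ) :
    a ^ m * s = c ^ m • s := by
  induction m with
  | zero => simp
  | succ m ih => rw [pow_succ, mul_assoc, h, mul_smul_comm, ih, smul_smul, ← pow_succ']

theorem mul_pow_eq_zsmul_of_mul_eq_zsmul {a s : R} {c : ℤ} (h : s * a = c • s) (m : ℕ) :
    s * a ^ m = c ^ m • s := by
  induction m with
  | zero => simp
  | succ m ih => rw [pow_succ', ← mul_assoc, h, smul_mul_assoc, ih, smul_smul, ← pow_succ']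

theorem add_zsmul_mul_add_zsmul {a b s : R} {p q c α β : ℤ} (ha : a * s = p • s)
    (hb : s * b = q • s) (hs : s * s = c • s) :
    (a + α • s) * (b + β • s) = a * b + (β * p + α * q + α * β * c) • s := by
  rw [add_mul, mul_add, mul_add, mul_smul_comm, ha, smul_mul_assoc, hb, smul_mul_assoc,
    mul_smul_comm, hs]
  module

theorem geom_sum_mul_geom_sum_pow (x : R) (k l : ℕ) :
    (∑ i ∈ range k, x ^ i) * ∑ j ∈ range l, (x ^ k) ^ j = ∑ t ∈ range (k * l), x ^ t := by
  induction l with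
  | zero => simp
  | succ l ih =>
    rw [sum_range_succ, mul_add, ih, Nat.mul_succ, sum_range_add, sum_mul]
    simp only [← pow_mul, ← pow_add, add_comm]

variable {x : R} {n : ℕ}

theorem geom_sum_pow_of_coprime (hx : x ^ n = 1) {k : ℕ} (hk : k.Coprime n) :
    ∑ i ∈ range n, (x ^ k) ^ i = ∑ i ∈ range n, x ^ i := by
  simp only [← pow_mul]
  exact sum_range_mul_of_coprime (fun i ↦ (pow_eq_pow_mod i hx).symm) hk

theorem pow_mul_geom_sum_of_pow_eq_one (hx : x ^ n = 1) (j : ℕ) :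
    x ^ j * ∑ i ∈ range n, x ^ i = ∑ i ∈ range n, x ^ i := by
  have hx' : x * ∑ i ∈ range n, x ^ i = ∑ i ∈ range n, x ^ i := by
    rw [← sub_eq_zero, ← sub_one_mul, mul_geom_sum, hx, sub_self]
  induction j with
  | zero => rw [pow_zero, one_mul]
  | succ j ih => rw [pow_succ', mul_assoc, ih, hx']

theorem geom_sum_mul_geom_sum_of_pow_eq_one (hx : x ^ n = 1) (k : ℕ) :
    (∑ i ∈ range k, x ^ i) * ∑ i ∈ range n, x ^ i = (k : ℤ) • ∑ i ∈ range n, x ^ i := by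
  simp only [sum_mul, pow_mul_geom_sum_of_pow_eq_one hx, sum_const, card_range, natCast_zsmul]

theorem geom_sum_mul_geom_sum_of_pow_eq_one' (hx : x ^ n = 1) (k : ℕ) :
    (∑ i ∈ range n, x ^ i) * ∑ i ∈ range k, x ^ i = (k : ℤ) • ∑ i ∈ range n, x ^ i := by
  rw [← geom_sum_mul_geom_sum_of_pow_eq_one hx k]
  exact (Commute.sum_left _ _ _ fun i _ ↦ Commute.sum_right _ _ _ fun j _ ↦
    Commute.pow_pow_self x i j).eq

/-- The Bass unit `u_{k,m}` built from `x`, where `x ^ n = 1` is intended. -/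
def cyclicBassElem (x : R) (n k m : ℕ) : R :=
  (∑ i ∈ range k, x ^ i) ^ m + ((1 - (k : ℤ) ^ m) / n) • ∑ i ∈ range n, x ^ i

theorem cyclicBassElem_mul_pow (hn : 0 < n) (hx : x ^ n = 1) {k k₁ m : ℕ} (hm : 0 < m)
    (h : k ^ m ≡ 1 [MOD n]) (h₁ : k₁ ^ m ≡ 1 [MOD n]) :
    cyclicBassElem x n k m * cyclicBassElem (x ^ k) n k₁ m = cyclicBassElem x n (k * k₁) m := by
  have hxk : (x ^ k) ^ n = 1 := by rw [← pow_mul, mul_comm, pow_mul, hx, one_pow]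
  have hnorm := geom_sum_pow_of_coprime hx (Nat.coprime_of_pow_modEq_one hm h)
  have hleft := pow_mul_eq_zsmul_of_mul_eq_zsmul (geom_sum_mul_geom_sum_of_pow_eq_one hx k) m
  have hright := mul_pow_eq_zsmul_of_mul_eq_zsmul (geom_sum_mul_geom_sum_of_pow_eq_one' hxk k₁) m
  rw [hnorm] at hright
  have hcomm : Commute (∑ i ∈ range k, x ^ i) (∑ j ∈ range k₁, (x ^ k) ^ j) :=
    Commute.sum_left _ _ _ fun i _ ↦ Commute.sum_right _ _ _ fun j _ ↦
      (Commute.self_pow x k).pow_pow i j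
  rw [cyclicBassElem, cyclicBassElem, cyclicBassElem, hnorm,
    add_zsmul_mul_add_zsmul hleft hright (geom_sum_mul_geom_sum_of_pow_eq_one hx n),
    ← hcomm.mul_pow, geom_sum_mul_geom_sum_pow, Nat.cast_mul, mul_pow,
    Int.one_sub_mul_ediv (by exact_mod_cast hn.ne') (by exact_mod_cast h.dvd)
      (by exact_mod_cast h₁.dvd)]

end Ring

theorem bassElem_eq_cyclicBassElem {G : Type*} [Group G] (g : G) (k m : ℕ) :
    bassElem g k m = cyclicBassElem (MonoidAlgebra.of ℤ G g) (orderOf g) k m := by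
  simp only [bassElem, cyclicBassElem, map_pow]

theorem bassElem_mul_pow_general {G : Type*} [Group G] (g : G) (hord : 0 < orderOf g)
    (k k₁ m : ℕ) (hm : 0 < m)
    (h : k ^ m ≡ 1 [MOD orderOf g]) (h₁ : k₁ ^ m ≡ 1 [MOD orderOf g]) :
    bassElem g k m * bassElem (g ^ k) k₁ m = bassElem g (k * k₁) m := by
  have hk : (orderOf g).Coprime k := (Nat.coprime_of_pow_modEq_one hm h).symm
  simp only [bassElem_eq_cyclicBassElem, hk.orderOf_pow, map_pow]
  exact cyclicBassElem_mul_pow hord (by rw [← map_pow, pow_orderOf_eq_one, map_one]) hm h h₁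

theorem bassElem_mul_pow {G : Type*} [Group G] (g : G) (hord : 0 < orderOf g)
    (k k₁ m : ℕ) (hk : 0 < k) (hk₁ : 0 < k₁) (hm : 0 < m)
    (h : k ^ m ≡ 1 [MOD orderOf g]) (h₁ : k₁ ^ m ≡ 1 [MOD orderOf g]) :
    bassElem g k m * bassElem (g ^ k) k₁ m = bassElem g (k * k₁) m :=
  bassElem_mul_pow_general g hord k k₁ m hm h h₁
end
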